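/- arXiv:math/0401242 — 7 statements merged into one kernel-verified Lean document; each statement's English description precedes it below -/
import Mathlib

section
/- Let A be a unital C*-algebra and let b be a positive full element of A (i.e., the closed two-sided ideal generated by b equals A). If there exist x, y in A with x·b·y = 1, then there exists z in A with z*·b·z = 1. -/
/-!
Write `b = s²` with `s = √b`. Then `(x s)(s y) = 1`, so `a = s y` is left invertible, and
`a⋆a ≥ ‖x s‖⁻² · 1`; hence `c = a⋆a = y⋆ b y` is strictly positive, and `z = y c^(-1/2)`
satisfies `z⋆ b z = c^(-1/2) c c^(-1/2) = 1`.
-/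

open scoped ENNReal MultiplierAlgebra

def IsFullIn {A : Type*} [NonUnitalNonAssocRing A] [TopologicalSpace A] (b : A) : Prop :=
  closure ((TwoSidedIdeal.span {b} : TwoSidedIdeal A) : Set A) = Set.univ

/-- Property (P1) of the paper. -/
def PropP1 (B : Type*) [Ring B] [TopologicalSpace B] : Prop :=
  ∀ b : B, IsFullIn b → ∃ x y : B, x * b * y = 1

/-- The piecewise-linear function `f_n` : `0` on `[0, 1/(n+1)]`, `1` on `[1/n, ∞)`,
linear in between. -/
noncomputable def fcut (n : ℕ) (t : ℝ) : ℝ := min 1 (max 0 ((n * (n + 1) : ℝ) * t - n))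

section

open CFC

variable {A : Type*} [CStarAlgebra A] [PartialOrder A] [StarOrderedRing A]

theorem isStrictlyPositive_star_mul_self_of_mul_eq_one {u a : A} (h : u * a = 1) :
    IsStrictlyPositive (star a * a) := by
  nontriviality A
  have hu : 0 < ‖u‖ ^ 2 := by
    have : u ≠ 0 := by rintro rfl; simp at h
    positivity
  have hle : (1 : A) ≤ ‖u‖ ^ 2 • (star a * a) := calc
    (1 : A) = star (u * a) * (u * a) := by simp [h]
    _ = star a * (star u * u) * a := by simp only [star_mul, mul_assoc]
    _ ≤ star a * algebraMap ℝ A (‖u‖ ^ 2) * a :=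
      star_left_conjugate_le_conjugate CStarAlgebra.star_mul_le_algebraMap_norm_sq a
    _ = ‖u‖ ^ 2 • (star a * a) := by
      rw [Algebra.algebraMap_eq_smul_one, mul_smul_comm, mul_one, smul_mul_assoc]
  have := (isStrictlyPositive_one.of_le hle).smul (inv_pos.mpr hu)
  rwa [inv_smul_smul₀ hu.ne'] at this

theorem isStrictlyPositive_star_left_conjugate_of_mul_mul_eq_one {b x y : A} (hb : 0 ≤ b)
    (h : x * b * y = 1) : IsStrictlyPositive (star y * b * y) := by
  have hs : IsSelfAdjoint (sqrt b) := .of_nonneg (sqrt_nonneg b)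
  have hconj : star (sqrt b * y) * (sqrt b * y) = star y * b * y := by
    rw [star_mul, hs.star_eq, mul_assoc, ← mul_assoc (sqrt b), sqrt_mul_sqrt_self b, ← mul_assoc]
  rw [← hconj]
  refine isStrictlyPositive_star_mul_self_of_mul_eq_one (u := x * sqrt b) ?_
  rw [mul_assoc, ← mul_assoc (sqrt b), sqrt_mul_sqrt_self b, ← mul_assoc, h]

theorem star_left_conjugate_mul_rpow_neg_one_half_eq_one {b y : A}
    (h : IsStrictlyPositive (star y * b * y)) :
    star (y * (star y * b * y) ^ (-(1 / 2) : ℝ)) * b *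
      (y * (star y * b * y) ^ (-(1 / 2) : ℝ)) = 1 := by
  set c := star y * b * y
  have hsa : star (c ^ (-(1 / 2) : ℝ)) = c ^ (-(1 / 2) : ℝ) :=
    (IsSelfAdjoint.of_nonneg rpow_nonneg).star_eq
  rw [star_mul, hsa, ← conjugate_rpow_neg_one_half c]
  simp only [c, mul_assoc]

end

theorem stmt0_general {A : Type*} [CStarAlgebra A] [PartialOrder A] [StarOrderedRing A]
    (b : A) (hb : 0 ≤ b)
    (x y : A) (hxy : x * b * y = 1) :
    ∃ z : A, star z * b * z = 1 :=
  ⟨_, star_left_conjugate_mul_rpow_neg_one_half_eq_one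
    (isStrictlyPositive_star_left_conjugate_of_mul_mul_eq_one hb hxy)⟩

/-- if `b ≥ 0` is full and `x * b * y = 1` for some `x, y`, then
`star z * b * z = 1` for some `z`. -/
theorem stmt0 {A : Type*} [CStarAlgebra A] [PartialOrder A] [StarOrderedRing A]
    (b : A) (hb : 0 ≤ b) (hfull : IsFullIn b)
    (x y : A) (hxy : x * b * y = 1) :
    ∃ z : A, star z * b * z = 1 :=
  stmt0_general b hb x y hxy
end

section
/- Let B be a unital C*-algebra with property (P1) (for every full element b of B there exist x, y ∈ B with x·b·y = 1). If B contains two mutually orthogonal full positive elements a, b with 0 ≤ a, b ≤ 1 and ab = 0, then B has property (P2): there exist isometries v₁, v₂ ∈ B (v₁*v₁ = v₂*v₂ = 1) whose range projections v₁v₁* and v₂v₂* are mutually orthogonal. -/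
open scoped ENNReal MultiplierAlgebra

/-!
Write `a = s²` and `b = t²` with `s = √a`, `t = √b`. Orthogonality `ab = 0` forces `st = 0`.
By (P1), `x a y = 1` for some `x, y`, so `w = s y` is left invertible; in a C⋆-algebra this makes
`w⋆w` invertible, and `v₁ = w (w⋆w)^(-1/2)` is an isometry of the form `s r`. Likewise
`v₂ = t r'`, and then `v₁v₁⋆ v₂v₂⋆ = s r r⋆ (s t) r' r'⋆ t = 0`.
-/

open CFC

section

variable {A : Type*} [CStarAlgebra A] [PartialOrder A] [StarOrderedRing A]

lemma isUnit_star_mul_self_of_mul_eq_one {u w : A} (h : u * w = 1) : IsUnit (star w * w) := by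
  nontriviality A
  have hle : (1 : A) ≤ (‖u‖ ^ 2) • (star w * w) :=
    calc (1 : A) = star (u * w) * (u * w) := by rw [h, star_one, one_mul]
      _ = star w * (star u * u) * w := by simp only [star_mul, mul_assoc]
      _ ≤ star w * algebraMap ℝ A (‖u‖ ^ 2) * w :=
          star_left_conjugate_le_conjugate CStarAlgebra.star_mul_le_algebraMap_norm_sq w
      _ = (‖u‖ ^ 2) • (star w * w) := by
          rw [Algebra.algebraMap_eq_smul_one, mul_smul_comm, smul_mul_assoc, mul_one]
  have hu : ‖u‖ ^ 2 ≠ 0 := by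
    rintro h0
    rw [h0, zero_smul] at hle
    exact one_ne_zero (le_antisymm hle zero_le_one)
  exact (isUnit_smul_iff (Units.mk0 _ hu) _).mp (CStarAlgebra.isUnit_of_le 1 hle)

lemma exists_isometry_mul_of_isUnit_star_mul_self {w : A} (hw : IsUnit (star w * w)) :
    ∃ c : A, star (w * c) * (w * c) = 1 := by
  set d := star w * w
  have hc : star (d ^ (-(1 / 2) : ℝ)) = d ^ (-(1 / 2) : ℝ) :=
    (IsSelfAdjoint.of_nonneg rpow_nonneg).star_eq
  refine ⟨d ^ (-(1 / 2) : ℝ), ?_⟩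
  calc star (w * d ^ (-(1 / 2) : ℝ)) * (w * d ^ (-(1 / 2) : ℝ))
      = d ^ (-(1 / 2) : ℝ) * d * d ^ (-(1 / 2) : ℝ) := by
        rw [star_mul, hc]; simp only [d, mul_assoc]
    _ = 1 := conjugate_rpow_neg_one_half d (hw.isStrictlyPositive (star_mul_self_nonneg w))

lemma CFC.sqrt_mul_eq_zero_of_mul_eq_zero {a c : A} (ha : 0 ≤ a) (h : a * c = 0) :
    sqrt a * c = 0 := by
  rw [← CStarRing.star_mul_self_eq_zero_iff, star_mul,
    (IsSelfAdjoint.of_nonneg (sqrt_nonneg a)).star_eq]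
  calc star c * sqrt a * (sqrt a * c) = star c * (sqrt a * sqrt a * c) := by simp only [mul_assoc]
    _ = 0 := by rw [sqrt_mul_sqrt_self a ha, h, mul_zero]

lemma CFC.sqrt_mul_sqrt_eq_zero_of_mul_eq_zero {a b : A} (ha : 0 ≤ a) (hb : 0 ≤ b)
    (h : a * b = 0) : sqrt a * sqrt b = 0 := by
  have hsa := (IsSelfAdjoint.of_nonneg (sqrt_nonneg a)).star_eq
  have hsb := (IsSelfAdjoint.of_nonneg (sqrt_nonneg b)).star_eq
  have hsa_b : b * sqrt a = 0 := by
    simpa [star_mul, hsa, (IsSelfAdjoint.of_nonneg hb).star_eq] using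
      congrArg star (sqrt_mul_eq_zero_of_mul_eq_zero ha h)
  simpa [star_mul, hsa, hsb] using congrArg star (sqrt_mul_eq_zero_of_mul_eq_zero hb hsa_b)

lemma PropP1.exists_isometry_sqrt_mul (hP1 : PropP1 A) {a : A} (ha : 0 ≤ a)
    (hfull : IsFullIn a) : ∃ r : A, star (sqrt a * r) * (sqrt a * r) = 1 := by
  obtain ⟨x, y, hxy⟩ := hP1 a hfull
  have hleft : (x * sqrt a) * (sqrt a * y) = 1 := by
    rw [mul_assoc, ← mul_assoc (sqrt a), sqrt_mul_sqrt_self a ha, ← mul_assoc, hxy]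
  obtain ⟨c, hc⟩ :=
    exists_isometry_mul_of_isUnit_star_mul_self (isUnit_star_mul_self_of_mul_eq_one hleft)
  exact ⟨y * c, by simpa only [mul_assoc] using hc⟩

end

lemma mul_star_mul_mul_star_eq_zero {R : Type*} [Semiring R] [StarMul R] {s t : R}
    (h : star s * t = 0) (r r' : R) : (s * r) * star (s * r) * ((t * r') * star (t * r')) = 0 := by
  calc (s * r) * star (s * r) * ((t * r') * star (t * r'))
      = s * r * star r * ((star s * t) * r' * star (t * r')) := by
        simp only [star_mul, mul_assoc]
    _ = 0 := by rw [h, zero_mul, zero_mul, mul_zero]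

theorem stmt1_general {B : Type*} [CStarAlgebra B] [PartialOrder B] [StarOrderedRing B]
    (hP1 : PropP1 B)
    (a b : B) (ha0 : 0 ≤ a) (hb0 : 0 ≤ b)
    (hab : a * b = 0) (hafull : IsFullIn a) (hbfull : IsFullIn b) :
    ∃ v₁ v₂ : B, star v₁ * v₁ = 1 ∧ star v₂ * v₂ = 1 ∧
      (v₁ * star v₁) * (v₂ * star v₂) = 0 := by
  obtain ⟨r₁, hr₁⟩ := hP1.exists_isometry_sqrt_mul ha0 hafull
  obtain ⟨r₂, hr₂⟩ := hP1.exists_isometry_sqrt_mul hb0 hbfull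
  refine ⟨sqrt a * r₁, sqrt b * r₂, hr₁, hr₂, mul_star_mul_mul_star_eq_zero ?_ r₁ r₂⟩
  rw [(IsSelfAdjoint.of_nonneg (sqrt_nonneg a)).star_eq]
  exact sqrt_mul_sqrt_eq_zero_of_mul_eq_zero ha0 hb0 hab

/-- a unital C*-algebra with (P1) containing two mutually orthogonal full
positive contractions has (P2): two isometries with mutually orthogonal range projections. -/
theorem stmt1 {B : Type*} [CStarAlgebra B] [PartialOrder B] [StarOrderedRing B]
    (hP1 : PropP1 B)
    (a b : B) (ha0 : 0 ≤ a) (ha1 : a ≤ 1) (hb0 : 0 ≤ b) (hb1 : b ≤ 1)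
    (hab : a * b = 0) (hafull : IsFullIn a) (hbfull : IsFullIn b) :
    ∃ v₁ v₂ : B, star v₁ * v₁ = 1 ∧ star v₂ * v₂ = 1 ∧
      (v₁ * star v₁) * (v₂ * star v₂) = 0 :=
  stmt1_general hP1 a b ha0 hb0 hab hafull hbfull
end

section
/- Let A be a unital C*-algebra and I a σ-unital closed two-sided ideal of A, with quotient map π : A → A/I. If a ∈ (A/I)₊ is a full element of A/I, then there exists a full positive element b ∈ A₊ with π(b) = a. -/
open scoped ENNReal MultiplierAlgebra

/-! Take a positive lift `c` of `a` and a strictly positive `e ∈ I`, and put `b = c + e`.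
Since `0 ≤ e ≤ b`, the element `e` lies in the closed ideal `J` generated by `b`: with
`r = √e` and `gₙ = fcut n b ∈ (b)`, one has
`‖e - r gₙ r‖² ≤ ‖r‖² ‖(1 - gₙ) b (1 - gₙ)‖ ≤ ‖r‖² / n`.
As `e` is strictly positive in `I`, this gives `I ⊆ J`. The surjection `π` is open, so
`π(J)` is closed, and it contains the ideal generated by `a = π b`; fullness of `a` then
forces `π(J) = Q`, hence `J = A` because `J` contains `ker π`. -/

lemma fcut_zero (n : ℕ) : fcut n 0 = 0 := by
  simp [fcut]

lemma fcut_eq_zero {n : ℕ} {t : ℝ} (ht : t ≤ 1 / (n + 1)) : fcut n t = 0 := by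
  have hnt : (n + 1 : ℝ) * t ≤ 1 := by
    rwa [le_div_iff₀ (by positivity), mul_comm] at ht
  have : (n * (n + 1) : ℝ) * t - n ≤ 0 := by nlinarith [(n.cast_nonneg : (0 : ℝ) ≤ n)]
  simp [fcut, this]

lemma fcut_eq_one {n : ℕ} (hn : 0 < n) {t : ℝ} (ht : 1 / n ≤ t) : fcut n t = 1 := by
  have hn' : (0 : ℝ) < n := by exact_mod_cast hn
  have hnt : 1 ≤ (n : ℝ) * t := by rwa [div_le_iff₀ hn', mul_comm] at ht
  have : 1 ≤ (n * (n + 1) : ℝ) * t - n := by nlinarith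
  simp [fcut, this, le_trans zero_le_one this]

lemma fcut_nonneg (n : ℕ) (t : ℝ) : 0 ≤ fcut n t :=
  le_min zero_le_one (le_max_left _ _)

lemma fcut_le_one (n : ℕ) (t : ℝ) : fcut n t ≤ 1 :=
  min_le_left _ _

lemma continuous_fcut (n : ℕ) : Continuous (fcut n) := by
  unfold fcut
  fun_prop

lemma continuous_fcut_div (n : ℕ) : Continuous fun t => fcut n t / t := by
  refine continuous_iff_continuousAt.2 fun t => ?_
  rcases eq_or_ne t 0 with rfl | ht
  · have : (fun t => fcut n t / t) =ᶠ[nhds 0] fun _ => 0 := by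
      filter_upwards [Iio_mem_nhds (show (0 : ℝ) < 1 / (n + 1) by positivity)] with s hs
      simp [fcut_eq_zero hs.le]
    exact continuousAt_const.congr this.symm
  · exact (continuous_fcut n).continuousAt.div continuousAt_id ht

lemma mul_fcut_div (n : ℕ) (t : ℝ) : t * (fcut n t / t) = fcut n t := by
  rcases eq_or_ne t 0 with rfl | ht
  · simp [fcut_zero]
  · exact mul_div_cancel₀ _ ht

lemma norm_one_sub_fcut_mul_le {n : ℕ} (hn : 0 < n) {t : ℝ} (ht : 0 ≤ t) :
    ‖(1 - fcut n t) * t * (1 - fcut n t)‖ ≤ 1 / n := by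
  rcases le_or_gt t (1 / n) with htn | htn
  · have h0 := fcut_nonneg n t
    have h1 := fcut_le_one n t
    rw [Real.norm_of_nonneg (by positivity)]
    nlinarith [mul_nonneg (mul_nonneg ht h0) (by linarith : 0 ≤ 2 - fcut n t)]
  · simp [fcut_eq_one hn htn.le]

lemma cfc_fcut_mem_span_singleton {A : Type*} [CStarAlgebra A] {b : A} (hb : IsSelfAdjoint b)
    (n : ℕ) :
    cfc (fcut n) b ∈ TwoSidedIdeal.span {b} := by
  have : cfc (fcut n) b = b * cfc (fun t => fcut n t / t) b := by
    conv_lhs => rw [← funext (mul_fcut_div n)]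
    rw [cfc_mul (fun t => t) (fun t => fcut n t / t) b continuousOn_id
      (continuous_fcut_div n).continuousOn, cfc_id' ℝ b hb]
  rw [this]
  exact TwoSidedIdeal.mul_mem_right _ _ _ (TwoSidedIdeal.subset_span rfl)

section CStarAlgebra

variable {A : Type*} [CStarAlgebra A] [PartialOrder A] [StarOrderedRing A]

lemma norm_one_sub_cfc_fcut_conj_le {b : A} (hb : 0 ≤ b) {n : ℕ} (hn : 0 < n) :
    ‖(1 - cfc (fcut n) b) * b * (1 - cfc (fcut n) b)‖ ≤ 1 / n := by
  have hcont : Continuous fun t => 1 - fcut n t := continuous_const.sub (continuous_fcut n)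
  have : cfc (fun t => (1 - fcut n t) * t * (1 - fcut n t)) b
      = (1 - cfc (fcut n) b) * b * (1 - cfc (fcut n) b) := by
    rw [cfc_mul (fun t => (1 - fcut n t) * t) (fun t => 1 - fcut n t) b
        (hcont.mul continuous_id).continuousOn hcont.continuousOn,
      cfc_mul (fun t => 1 - fcut n t) (fun t => t) b hcont.continuousOn continuousOn_id,
      cfc_id' ℝ b, cfc_sub (fun _ => 1) (fcut n) b continuousOn_const
        (continuous_fcut n).continuousOn, cfc_const_one ℝ b]
  rw [← this]
  exact norm_cfc_le (by positivity) fun t ht =>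
    norm_one_sub_fcut_mul_le hn (spectrum_nonneg_of_nonneg hb ht)

lemma norm_mul_sqrt_sq_le {e b : A} (he : 0 ≤ e) (heb : e ≤ b) (x : A) :
    ‖x * CFC.sqrt e‖ ^ 2 ≤ ‖x * b * star x‖ := by
  have hsqrt : x * CFC.sqrt e * star (x * CFC.sqrt e) = x * e * star x := by
    rw [star_mul, (CFC.sqrt_nonneg e).isSelfAdjoint.star_eq, ← mul_assoc, mul_assoc x,
      CFC.sqrt_mul_sqrt_self e he]
  rw [sq, ← CStarRing.norm_self_mul_star, hsqrt]
  exact CStarAlgebra.norm_le_norm_of_nonneg_of_le (star_right_conjugate_nonneg he x)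
    (star_right_conjugate_le_conjugate heb x)

lemma mem_closure_span_singleton_of_le {e b : A} (he : 0 ≤ e) (heb : e ≤ b) :
    e ∈ closure (TwoSidedIdeal.span {b} : Set A) := by
  have hb : 0 ≤ b := he.trans heb
  set r := CFC.sqrt e
  set g : ℕ → A := fun n => cfc (fcut (n + 1)) b
  have hg : ∀ n, ‖(1 - g n) * r‖ ≤ √(1 / (n + 1)) := fun n => by
    refine Real.le_sqrt_of_sq_le ((norm_mul_sqrt_sq_le he heb _).trans ?_)
    have hsa : IsSelfAdjoint (1 - g n) := (IsSelfAdjoint.one A).sub (cfc_predicate _ _)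
    rw [hsa.star_eq]
    exact_mod_cast norm_one_sub_cfc_fcut_conj_le hb n.succ_pos
  have hbound : ∀ n, ‖r * g n * r - e‖ ≤ ‖r‖ * √(1 / (n + 1)) := fun n => by
    have : r * g n * r - e = -(r * ((1 - g n) * r)) := by
      rw [← CFC.sqrt_mul_sqrt_self e he]
      noncomm_ring
    rw [this, norm_neg]
    exact (norm_mul_le _ _).trans (by gcongr; exact hg n)
  have hlim : Filter.Tendsto (fun n : ℕ => ‖r‖ * √(1 / (n + 1))) Filter.atTop (nhds 0) := by
    simpa using (Real.continuous_sqrt.tendsto 0 |>.comp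
      tendsto_one_div_add_atTop_nhds_zero_nat).const_mul ‖r‖
  refine mem_closure_of_tendsto (f := fun n => r * g n * r) (b := Filter.atTop) ?_
    (Filter.Eventually.of_forall fun n => TwoSidedIdeal.mul_mem_right _ _ _
      (TwoSidedIdeal.mul_mem_left _ _ _ (cfc_fcut_mem_span_singleton hb.isSelfAdjoint _)))
  exact tendsto_iff_norm_sub_tendsto_zero.2 (squeeze_zero (fun _ => norm_nonneg _) hbound hlim)

end CStarAlgebra

lemma TwoSidedIdeal.coe_span_image_subset {R S F : Type*} [Ring R] [Ring S] [FunLike F R S]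
    [RingHomClass F R S] {f : F}
    (hf : Function.Surjective f) (s : Set R) : (span (f '' s) : Set S) ⊆ f '' span s := by
  intro x hx
  induction hx using TwoSidedIdeal.span_induction with
  | mem x hx =>
    obtain ⟨y, hy, rfl⟩ := hx
    exact ⟨y, subset_span hy, rfl⟩
  | zero => exact ⟨0, zero_mem _, map_zero f⟩
  | add x y _ _ hx hy =>
    obtain ⟨p, hp, rfl⟩ := hx
    obtain ⟨q, hq, rfl⟩ := hy
    exact ⟨p + q, add_mem _ hp hq, map_add f p q⟩
  | neg x _ hx =>
    obtain ⟨p, hp, rfl⟩ := hx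
    exact ⟨-p, neg_mem _ hp, map_neg f p⟩
  | left_absorb a x _ hx =>
    obtain ⟨p, hp, rfl⟩ := hx
    obtain ⟨w, rfl⟩ := hf a
    exact ⟨w * p, mul_mem_left _ _ _ hp, map_mul f w p⟩
  | right_absorb a x _ hx =>
    obtain ⟨p, hp, rfl⟩ := hx
    obtain ⟨w, rfl⟩ := hf a
    exact ⟨p * w, mul_mem_right _ _ _ hp, map_mul f p w⟩

lemma IsFullIn.of_map {A Q : Type*} [Ring A] [TopologicalSpace A] [ContinuousAdd A] [Ring Q]
    [TopologicalSpace Q] {F : Type*} [FunLike F A Q] [RingHomClass F A Q] {f : F}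
    (hf : Function.Surjective f) (hfo : IsOpenMap f) {b : A}
    (hker : ∀ x, f x = 0 → x ∈ closure (TwoSidedIdeal.span {b} : Set A))
    (hfull : IsFullIn (f b)) : IsFullIn b := by
  set J := closure (TwoSidedIdeal.span {b} : Set A)
  have hsat : f ⁻¹' (f '' TwoSidedIdeal.span {b}) ⊆ J := by
    rintro x ⟨z, hz, hzx⟩
    have hxz : x - z ∈ J := hker _ (by rw [map_sub, hzx, sub_self])
    simpa only [add_sub_cancel] using map_mem_closure₂ continuous_add (subset_closure hz) hxz
      fun p hp q hq => TwoSidedIdeal.add_mem _ hp hq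
  refine Set.eq_univ_of_forall fun x => closure_minimal hsat isClosed_closure
    (hfo.preimage_closure_subset_closure_preimage ?_)
  refine closure_mono ?_ (hfull.symm ▸ Set.mem_univ (f x))
  simpa using TwoSidedIdeal.coe_span_image_subset hf {b}

open CStarAlgebra in
lemma NonUnitalStarAlgHom.isOpenMap_of_surjective {F A B : Type*} [NonUnitalCStarAlgebra A]
    [NonUnitalCStarAlgebra B]
    [FunLike F A B] [NonUnitalAlgHomClass F ℂ A B] [StarHomClass F A B] {φ : F}
    (hφ : Function.Surjective φ) : IsOpenMap φ :=
  ContinuousLinearMap.isOpenMap ⟨(φ : A →ₗ[ℂ] B), map_continuous φ⟩ hφ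

lemma exists_nonneg_map_eq {F A B : Type*} [NonUnitalSemiring A] [StarRing A] [PartialOrder A]
    [StarOrderedRing A] [NonUnitalCStarAlgebra B] [PartialOrder B] [StarOrderedRing B]
    [FunLike F A B] [MulHomClass F A B] [StarHomClass F A B] {φ : F}
    (hφ : Function.Surjective φ) {a : B} (ha : 0 ≤ a) : ∃ c, 0 ≤ c ∧ φ c = a := by
  obtain ⟨s, hs⟩ := hφ (CFC.sqrt a)
  refine ⟨star s * s, star_mul_self_nonneg s, ?_⟩
  rw [map_mul, map_star, hs, (CFC.sqrt_nonneg a).isSelfAdjoint.star_eq,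
    CFC.sqrt_mul_sqrt_self a ha]

theorem stmt2_general {A Q : Type*} [CStarAlgebra A] [PartialOrder A] [StarOrderedRing A]
    [CStarAlgebra Q] [PartialOrder Q] [StarOrderedRing Q]
    (I : TwoSidedIdeal A)
    -- σ-unitality of I : a strictly positive element
    (hσ : ∃ e : A, e ∈ I ∧ 0 ≤ e ∧ closure {x | ∃ y ∈ I, x = e * y * e} = (I : Set A))
    (π : A →⋆ₐ[ℂ] Q) (hsurj : Function.Surjective π)
    (hker : ∀ x : A, π x = 0 ↔ x ∈ I)
    (a : Q) (ha : 0 ≤ a) (hafull : IsFullIn a) :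
    ∃ b : A, 0 ≤ b ∧ IsFullIn b ∧ π b = a := by
  obtain ⟨e, heI, he, hI⟩ := hσ
  obtain ⟨c, hc, rfl⟩ := exists_nonneg_map_eq hsurj ha
  have hπ : π (c + e) = π c := by rw [map_add, (hker e).2 heI, add_zero]
  refine ⟨c + e, add_nonneg hc he, ?_, hπ⟩
  have heJ : e ∈ closure (TwoSidedIdeal.span {c + e} : Set A) :=
    mem_closure_span_singleton_of_le he (le_add_of_nonneg_left hc)
  refine IsFullIn.of_map hsurj (NonUnitalStarAlgHom.isOpenMap_of_surjective hsurj)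
    (fun x hx => ?_) (hπ ▸ hafull)
  rw [hker, ← SetLike.mem_coe, ← hI] at hx
  refine closure_minimal ?_ isClosed_closure hx
  rintro _ ⟨y, -, rfl⟩
  simpa only [mul_assoc] using map_mem_closure (continuous_mul_const (y * e)) heJ
    fun z => TwoSidedIdeal.mul_mem_right _ z (y * e)

/-- a full positive element of the quotient `A/I` (modelled by a surjective
star homomorphism `π : A → Q` with kernel the σ-unital closed two-sided ideal `I`) lifts
to a full positive element of `A`. -/
theorem stmt2 {A Q : Type*} [CStarAlgebra A] [PartialOrder A] [StarOrderedRing A]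
    [CStarAlgebra Q] [PartialOrder Q] [StarOrderedRing Q]
    (I : TwoSidedIdeal A) (hclosed : IsClosed (I : Set A))
    -- σ-unitality of I : a strictly positive element
    (hσ : ∃ e : A, e ∈ I ∧ 0 ≤ e ∧ closure {x | ∃ y ∈ I, x = e * y * e} = (I : Set A))
    (π : A →⋆ₐ[ℂ] Q) (hsurj : Function.Surjective π)
    (hker : ∀ x : A, π x = 0 ↔ x ∈ I)
    (a : Q) (ha : 0 ≤ a) (hafull : IsFullIn a) :
    ∃ b : A, 0 ≤ b ∧ IsFullIn b ∧ π b = a :=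
  stmt2_general I hσ π hsurj hker a ha hafull
end

section
/- Let A be a unital C*-algebra and I a σ-unital closed two-sided ideal of A. If A has property (P1) (every full element b of A admits x, y ∈ A with x b y = 1), then the quotient A/I also has property (P1). -/
/-!
A full element `π a` of the quotient lifts to a full element of `A` once the kernel is
added in: with `e` the strictly positive element of `I`, put `c = a⋆a + e⋆e`. Whenever `a⋆a ≤ c`,
`a` lies in the closed ideal `J` generated by `c`, because `a (1 - q)` with `q = δ (c + δ)⁻¹`
lies in the ideal generated by `c` and `‖a q‖² ≤ ‖q c q‖ ≤ δ`. Hence `a, e ∈ J`, and `I ⊆ J`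
since `I` is the closure of `e I e`. In a unital Banach algebra a dense ideal contains a unit,
so fullness of `π a` means that the ideal it generates is everything; that ideal lies in
`π(J)`, so `1 ∈ J + I = J` and `c` is full. Property (P1) in `A` gives `x c y = 1`, and
applying `π` kills `e⋆e`: `π x · (π a)⋆ · π a · π y = 1`.
-/

open scoped ENNReal MultiplierAlgebra

namespace TwoSidedIdeal

section Topological

variable {R : Type*} [Ring R] [TopologicalSpace R] [IsTopologicalRing R]

protected def closure (I : TwoSidedIdeal R) : TwoSidedIdeal R :=
  .mk' (closure I) (subset_closure I.zero_mem)
    (fun hx hy => map_mem_closure₂ continuous_add hx hy fun _ ha _ hb => I.add_mem ha hb)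
    (fun hx => map_mem_closure continuous_neg hx fun _ => I.neg_mem)
    (fun {x _} hy => map_mem_closure (continuous_const_mul x) hy fun _ => I.mul_mem_left x _)
    (fun {_ y} hx => map_mem_closure (f := (· * y)) (continuous_mul_const y) hx
      fun _ hz => I.mul_mem_right _ y hz)

@[simp]
lemma coe_closure (I : TwoSidedIdeal R) : (I.closure : Set R) = closure I := by
  rw [TwoSidedIdeal.closure, coe_mk']

lemma le_closure (I : TwoSidedIdeal R) : I ≤ I.closure := fun _ hx => by
  rw [← SetLike.mem_coe, coe_closure]; exact subset_closure hx

lemma isClosed_closure (I : TwoSidedIdeal R) : IsClosed (I.closure : Set R) := by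
  rw [coe_closure]; exact _root_.isClosed_closure

end Topological

lemma closure_eq_top_iff {R : Type*} [NormedRing R] [HasSummableGeomSeries R]
    (I : TwoSidedIdeal R) : I.closure = ⊤ ↔ I = ⊤ := by
  refine ⟨fun h => ?_, fun h => top_le_iff.1 (h ▸ I.le_closure)⟩
  by_contra hI
  have hsub : (I : Set R) ⊆ nonunits R :=
    coe_subset_nonunits (I := I.asIdeal) fun h' =>
      hI (I.one_mem_iff.1 ((Ideal.eq_top_iff_one _).1 h'))
  have h1 : (1 : R) ∈ closure (I : Set R) := by
    rw [← coe_closure, h]; trivial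
  exact one_notMem_nonunits (closure_minimal hsub nonunits.isClosed h1)

section Surjective

variable {R S F : Type*} [Ring R] [Ring S] [FunLike F R S] [RingHomClass F R S]
  {f : F}

lemma coe_map_of_surjective (hf : Function.Surjective f) (I : TwoSidedIdeal R) :
    (I.map f : Set S) = f '' I := by
  let K : TwoSidedIdeal S := .mk' (f '' I) ⟨0, I.zero_mem, map_zero f⟩
    (by
      rintro _ _ ⟨x, hx, rfl⟩ ⟨y, hy, rfl⟩
      exact ⟨x + y, I.add_mem hx hy, map_add f x y⟩)
    (by rintro _ ⟨x, hx, rfl⟩; exact ⟨-x, I.neg_mem hx, map_neg f x⟩)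
    (by
      rintro x _ ⟨y, hy, rfl⟩
      obtain ⟨x, rfl⟩ := hf x
      exact ⟨x * y, I.mul_mem_left _ _ hy, map_mul f x y⟩)
    (by
      rintro _ y ⟨x, hx, rfl⟩
      obtain ⟨y, rfl⟩ := hf y
      exact ⟨x * y, I.mul_mem_right _ _ hx, map_mul f x y⟩)
  have hK : I.map f ≤ K := span_le.2 fun x hx => (mem_mk' ..).2 hx
  exact subset_antisymm (fun x hx => (mem_mk' ..).1 (hK hx)) subset_span

lemma eq_top_of_map_eq_top (hf : Function.Surjective f) {J : TwoSidedIdeal R}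
    (hker : ∀ x, f x = 0 → x ∈ J) (h : J.map f = ⊤) : J = ⊤ := by
  obtain ⟨j, hj, hj1⟩ : (1 : S) ∈ f '' J := by
    rw [← coe_map_of_surjective hf, h]; trivial
  have h1j : 1 - j ∈ J := hker _ (by rw [map_sub, map_one, hj1, sub_self])
  exact J.one_mem_iff.1 (by simpa using J.add_mem h1j hj)

end Surjective

end TwoSidedIdeal

open TwoSidedIdeal

lemma isFullIn_iff_closure_span_eq_top {R : Type*} [Ring R] [TopologicalSpace R]
    [IsTopologicalRing R] (b : R) : IsFullIn b ↔ (span {b}).closure = ⊤ := by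
  rw [IsFullIn, ← coe_closure, ← coe_top, SetLike.coe_set_eq]

section CStarAlgebra

variable {A : Type*} [CStarAlgebra A] [PartialOrder A] [StarOrderedRing A]

lemma norm_mul_sq_le_of_star_mul_self_le {a c : A} (h : star a * a ≤ c) (q : A) :
    ‖a * q‖ ^ 2 ≤ ‖star q * c * q‖ := by
  calc ‖a * q‖ ^ 2 = ‖star q * (star a * a) * q‖ := by
        rw [sq, ← CStarRing.norm_star_mul_self, star_mul, mul_assoc, mul_assoc, mul_assoc]
    _ ≤ ‖star q * c * q‖ :=
        CStarAlgebra.norm_le_norm_of_nonneg_of_le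
          (star_left_conjugate_nonneg (star_mul_self_nonneg a) q)
          (star_left_conjugate_le_conjugate h q)

lemma exists_one_sub_mem_span_and_norm_conj_le {c : A} (hc : 0 ≤ c) {δ : ℝ} (hδ : 0 < δ) :
    ∃ q : A, 1 - q ∈ span {c} ∧ ‖star q * c * q‖ ≤ δ := by
  have hspec : ∀ t ∈ spectrum ℝ c, t + δ ≠ 0 := fun t ht =>
    (add_pos_of_nonneg_of_pos (spectrum_nonneg_of_nonneg hc ht) hδ).ne'
  have hres : ContinuousOn (fun t : ℝ => (t + δ)⁻¹) (spectrum ℝ c) :=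
    (continuousOn_id.add continuousOn_const).inv₀ hspec
  have hq : ContinuousOn (fun t : ℝ => δ * (t + δ)⁻¹) (spectrum ℝ c) :=
    continuousOn_const.mul hres
  set q := cfc (fun t : ℝ => δ * (t + δ)⁻¹) c
  refine ⟨q, ?_, ?_⟩
  · have h1q : 1 - q = c * cfc (fun t : ℝ => (t + δ)⁻¹) c := by
      calc 1 - q = cfc (fun t : ℝ => 1 - δ * (t + δ)⁻¹) c := by
            rw [cfc_sub _ _ c continuousOn_const hq, cfc_const_one ℝ c]
        _ = cfc (fun t : ℝ => t * (t + δ)⁻¹) c := cfc_congr fun t ht => by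
            field_simp [hspec t ht]; ring
        _ = c * cfc (fun t : ℝ => (t + δ)⁻¹) c := by
            rw [cfc_mul (fun t : ℝ => t) _ c continuousOn_id hres, cfc_id' ℝ c]
    rw [h1q]
    exact mul_mem_right _ _ _ (subset_span rfl)
  · have hqc :
        star q * c * q = cfc (fun t : ℝ => δ * (t + δ)⁻¹ * t * (δ * (t + δ)⁻¹)) c := by
      rw [cfc_mul (fun t : ℝ => δ * (t + δ)⁻¹ * t) _ c (hq.mul continuousOn_id) hq,
        cfc_mul _ (fun t : ℝ => t) c hq continuousOn_id,
        cfc_id' ℝ c, (cfc_predicate _ c : IsSelfAdjoint q).star_eq]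
    rw [hqc]
    refine norm_cfc_le hδ.le fun t ht => ?_
    have ht₀ : 0 ≤ t := spectrum_nonneg_of_nonneg hc ht
    have htδ : 0 < t + δ := by positivity
    rw [Real.norm_of_nonneg (by positivity)]
    calc δ * (t + δ)⁻¹ * t * (δ * (t + δ)⁻¹) = δ * (δ * t / (t + δ) ^ 2) := by
          field_simp
      _ ≤ δ * 1 := by gcongr; exact div_le_one_of_le₀ (by nlinarith) (by positivity)
      _ = δ := mul_one δ

lemma mem_closure_span_of_star_mul_self_le {a c : A} (h : star a * a ≤ c) :
    a ∈ (span {c}).closure := by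
  rw [← SetLike.mem_coe, coe_closure, Metric.mem_closure_iff]
  intro ε hε
  obtain ⟨q, hq, hqc⟩ :=
    exists_one_sub_mem_span_and_norm_conj_le ((star_mul_self_nonneg a).trans h)
      (half_pos (pow_pos hε 2))
  refine ⟨a * (1 - q), mul_mem_left _ _ _ hq, ?_⟩
  have hsq : ‖a * q‖ ^ 2 < ε ^ 2 :=
    (norm_mul_sq_le_of_star_mul_self_le h q).trans_lt
      (hqc.trans_lt (half_lt_self (by positivity)))
  rw [dist_eq_norm, mul_one_sub, sub_sub_cancel]
  exact lt_of_pow_lt_pow_left₀ 2 hε.le hsq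

end CStarAlgebra

theorem stmt3_general {A Q : Type*} [CStarAlgebra A] [PartialOrder A] [StarOrderedRing A]
    [CStarAlgebra Q]
    (I : TwoSidedIdeal A)
    (hσ : ∃ e : A, e ∈ I ∧ 0 ≤ e ∧ closure {x | ∃ y ∈ I, x = e * y * e} = (I : Set A))
    (π : A →⋆ₐ[ℂ] Q) (hsurj : Function.Surjective π)
    (hker : ∀ x : A, π x = 0 ↔ x ∈ I)
    (hA : PropP1 A) : PropP1 Q := by
  obtain ⟨e, heI, -, he⟩ := hσ
  intro b hb
  obtain ⟨a, rfl⟩ := hsurj b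
  set c := star a * a + star e * e
  set J := (span {c}).closure
  have haJ : a ∈ J :=
    mem_closure_span_of_star_mul_self_le (le_add_of_nonneg_right (star_mul_self_nonneg e))
  have heJ : e ∈ J :=
    mem_closure_span_of_star_mul_self_le (le_add_of_nonneg_left (star_mul_self_nonneg a))
  have hIJ : (I : Set A) ⊆ J := he ▸ closure_minimal
    (by rintro _ ⟨y, -, rfl⟩; exact J.mul_mem_right _ _ (J.mul_mem_right _ _ heJ))
    (span {c}).isClosed_closure
  have hJ : J = ⊤ := by
    refine eq_top_of_map_eq_top hsurj (fun x hx => hIJ ((hker x).1 hx)) (top_le_iff.1 ?_)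
    rw [← (closure_eq_top_iff _).1 ((isFullIn_iff_closure_span_eq_top _).1 hb)]
    exact span_le.2 (Set.singleton_subset_iff.2 (subset_span ⟨a, haJ, rfl⟩))
  obtain ⟨x, y, hxy⟩ := hA c ((isFullIn_iff_closure_span_eq_top c).2 hJ)
  refine ⟨π x * star (π a), π y, ?_⟩
  simpa [c, map_star, (hker e).2 heI, mul_assoc] using congrArg π hxy

/-- property (P1) passes to quotients by σ-unital closed two-sided ideals
(the quotient `A/I` is modelled by a surjective star homomorphism with kernel `I`). -/
theorem stmt3 {A Q : Type*} [CStarAlgebra A] [PartialOrder A] [StarOrderedRing A]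
    [CStarAlgebra Q]
    (I : TwoSidedIdeal A) (hclosed : IsClosed (I : Set A))
    (hσ : ∃ e : A, e ∈ I ∧ 0 ≤ e ∧ closure {x | ∃ y ∈ I, x = e * y * e} = (I : Set A))
    (π : A →⋆ₐ[ℂ] Q) (hsurj : Function.Surjective π)
    (hker : ∀ x : A, π x = 0 ↔ x ∈ I)
    (hA : PropP1 A) : PropP1 Q :=
  stmt3_general I hσ π hsurj hker hA
end

section
/- Let B be a C*-algebra, A ⊆ B a C*-subalgebra, a ∈ A₊, and let C = cl(a B a) be the hereditary C*-subalgebra of B generated by a. Then for any approximate identity (eₙ) of A, one has ‖eₙ b − b‖ → 0 and ‖b eₙ − b‖ → 0 for every b ∈ C. -/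
open scoped ENNReal MultiplierAlgebra

/-!
The set of elements `x` with `e i * x → x` contains `a`, is closed under right multiplication,
and is closed because the left multiplications by the uniformly bounded `e i` form an
equicontinuous family; hence it contains the closed right ideal `cl(a B) ⊇ cl(a B a)`.
Symmetrically for `x * e i → x`.
-/

open Filter Topology

section ApproximateUnit

variable {R ι : Type*} [NonUnitalSeminormedRing R] {e : ι → R} {C : ℝ} {l : Filter ι}

lemma equicontinuous_mul_left_of_norm_le (he : ∀ i, ‖e i‖ ≤ C) :
    Equicontinuous fun i (x : R) => e i * x :=
  Metric.equicontinuous_of_continuity_modulus (C * ·)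
    ((continuous_const_mul C).tendsto' 0 0 (mul_zero C)) _
    fun x y i => by
      rw [dist_eq_norm, dist_eq_norm, ← mul_sub]
      exact (norm_mul_le _ _).trans (mul_le_mul_of_nonneg_right (he i) (norm_nonneg _))

lemma equicontinuous_mul_right_of_norm_le (he : ∀ i, ‖e i‖ ≤ C) :
    Equicontinuous fun i (x : R) => x * e i :=
  Metric.equicontinuous_of_continuity_modulus (C * ·)
    ((continuous_const_mul C).tendsto' 0 0 (mul_zero C)) _
    fun x y i => by
      rw [dist_eq_norm, dist_eq_norm, ← sub_mul]
      exact (norm_mul_le _ _).trans (by rw [mul_comm]; gcongr; exact he i)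

lemma isClosed_setOf_tendsto_mul_left (he : ∀ i, ‖e i‖ ≤ C) :
    IsClosed {x : R | Tendsto (fun i => e i * x) l (𝓝 x)} :=
  (equicontinuous_mul_left_of_norm_le he).isClosed_setOfPred_tendsto continuous_id

lemma isClosed_setOf_tendsto_mul_right (he : ∀ i, ‖e i‖ ≤ C) :
    IsClosed {x : R | Tendsto (fun i => x * e i) l (𝓝 x)} :=
  (equicontinuous_mul_right_of_norm_le he).isClosed_setOfPred_tendsto continuous_id

lemma tendsto_mul_left_of_mem_closure_range_mul (he : ∀ i, ‖e i‖ ≤ C) {a b : R}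
    (ha : Tendsto (fun i => e i * a) l (𝓝 a)) (hb : b ∈ closure (Set.range (a * ·))) :
    Tendsto (fun i => e i * b) l (𝓝 b) :=
  closure_minimal (s := Set.range (a * ·))
    (by rintro _ ⟨x, rfl⟩; simpa only [Set.mem_ofPred_eq, mul_assoc] using ha.mul_const x)
    (isClosed_setOf_tendsto_mul_left he) hb

lemma tendsto_mul_right_of_mem_closure_range_mul (he : ∀ i, ‖e i‖ ≤ C) {a b : R}
    (ha : Tendsto (fun i => a * e i) l (𝓝 a)) (hb : b ∈ closure (Set.range (· * a))) :
    Tendsto (fun i => b * e i) l (𝓝 b) :=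
  closure_minimal (s := Set.range (· * a))
    (by rintro _ ⟨x, rfl⟩; simpa only [Set.mem_ofPred_eq, mul_assoc] using ha.const_mul x)
    (isClosed_setOf_tendsto_mul_right he) hb

end ApproximateUnit

theorem stmt4_general {B : Type*} [NonUnitalCStarAlgebra B]
    (A : NonUnitalStarSubalgebra ℂ B)
    (a : B) (haA : a ∈ A)
    (e : ℕ → B) (he1 : ∀ n, ‖e n‖ ≤ 1)
    (happ : ∀ x ∈ A,
      Filter.Tendsto (fun n => ‖e n * x - x‖) Filter.atTop (nhds 0) ∧
      Filter.Tendsto (fun n => ‖x * e n - x‖) Filter.atTop (nhds 0)) :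
    ∀ b ∈ closure {y : B | ∃ x : B, y = a * x * a},
      Filter.Tendsto (fun n => ‖e n * b - b‖) Filter.atTop (nhds 0) ∧
      Filter.Tendsto (fun n => ‖b * e n - b‖) Filter.atTop (nhds 0) := by
  intro b hb
  obtain ⟨hleft, hright⟩ := happ a haA
  simp only [← tendsto_iff_norm_sub_tendsto_zero] at hleft hright ⊢
  have hb_left : b ∈ closure (Set.range (a * ·)) :=
    closure_mono (by rintro _ ⟨x, rfl⟩; exact ⟨x * a, (mul_assoc a x a).symm⟩) hb
  have hb_right : b ∈ closure (Set.range (· * a)) :=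
    closure_mono (by rintro _ ⟨x, rfl⟩; exact ⟨a * x, rfl⟩) hb
  exact ⟨tendsto_mul_left_of_mem_closure_range_mul he1 hleft hb_left,
    tendsto_mul_right_of_mem_closure_range_mul he1 hright hb_right⟩

/-- an approximate identity of a C*-subalgebra `A ⊆ B` acts as an approximate
identity on the hereditary subalgebra `cl(a B a)` of `B` generated by a positive `a ∈ A`. -/
theorem stmt4 {B : Type*} [NonUnitalCStarAlgebra B] [PartialOrder B] [StarOrderedRing B]
    (A : NonUnitalStarSubalgebra ℂ B) (hA : IsClosed (A : Set B))
    (a : B) (haA : a ∈ A) (ha : 0 ≤ a)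
    (e : ℕ → B) (heA : ∀ n, e n ∈ A) (he0 : ∀ n, 0 ≤ e n) (he1 : ∀ n, ‖e n‖ ≤ 1)
    (happ : ∀ x ∈ A,
      Filter.Tendsto (fun n => ‖e n * x - x‖) Filter.atTop (nhds 0) ∧
      Filter.Tendsto (fun n => ‖x * e n - x‖) Filter.atTop (nhds 0)) :
    ∀ b ∈ closure {y : B | ∃ x : B, y = a * x * a},
      Filter.Tendsto (fun n => ‖e n * b - b‖) Filter.atTop (nhds 0) ∧
      Filter.Tendsto (fun n => ‖b * e n - b‖) Filter.atTop (nhds 0) :=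
  stmt4_general A a haA e he1 happ
end

section
/- Let A be a unital C*-algebra, B = A ⊗ K, and let a ∈ M(B) (the multiplier algebra) such that π(a) is full in the corona algebra M(B)/B, where π : M(B) → M(B)/B is the quotient map. Then a is full in M(B). -/
/-!
Units form an open set, so an element of a Banach algebra is full as soon as `1` lies in the
(unclosed) ideal it generates. Hence some `w = 1 + b` with `b ∈ B` lies in the ideal generated
by `a`. With `Eₘ` a diagonal partial sum of the matrix units such that `‖b - b Eₘ‖ < 1`, the
projection `P = 1 - Eₘ` satisfies `P w P = (1 + P b P) P` with `1 + P b P` invertible, so `P` is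
in the ideal. Then so is `eₘₘ = eₘₘ P`, hence every `eᵢᵢ = eᵢₘ eₘₘ eₘᵢ`, hence `Eₘ`, and
finally `1 = P + Eₘ`.
-/

open scoped ENNReal MultiplierAlgebra

open Finset

namespace TwoSidedIdeal

theorem mem_map_iff_of_surjective {R S F : Type*} [NonUnitalNonAssocRing R]
    [NonUnitalNonAssocRing S] [FunLike F R S] [NonUnitalRingHomClass F R S]
    {f : F} (hf : Function.Surjective f) {I : TwoSidedIdeal R} {y : S} :
    y ∈ I.map f ↔ ∃ x ∈ I, f x = y := by
  refine ⟨fun hy => ?_, fun ⟨x, hx, hxy⟩ => subset_span ⟨x, hx, hxy⟩⟩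
  let J : TwoSidedIdeal S := .mk' (f '' I) ⟨0, I.zero_mem, map_zero f⟩
    (by rintro _ _ ⟨x, hx, rfl⟩ ⟨x', hx', rfl⟩
        exact ⟨x + x', I.add_mem hx hx', map_add f x x'⟩)
    (by rintro _ ⟨x, hx, rfl⟩; exact ⟨-x, I.neg_mem hx, map_neg f x⟩)
    (by rintro s _ ⟨x, hx, rfl⟩
        obtain ⟨r, rfl⟩ := hf s
        exact ⟨r * x, I.mul_mem_left r x hx, map_mul f r x⟩)
    (by rintro _ s ⟨x, hx, rfl⟩
        obtain ⟨r, rfl⟩ := hf s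
        exact ⟨x * r, I.mul_mem_right x r hx, map_mul f x r⟩)
  have hJ : ∀ z, z ∈ J ↔ z ∈ f '' I := mem_mk' _ _ _ _ _ _
  exact (hJ y).1 (span_le.2 (fun z hz => (hJ z).2 hz) hy)

theorem exists_mem_span_singleton_of_surjective {R S F : Type*} [NonUnitalNonAssocRing R]
    [NonUnitalNonAssocRing S] [FunLike F R S] [NonUnitalRingHomClass F R S]
    {f : F} (hf : Function.Surjective f) {a : R} {y : S} (hy : y ∈ span {f a}) :
    ∃ x ∈ span {a}, f x = y := by
  refine (mem_map_iff_of_surjective hf).1 (span_le.2 ?_ hy)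
  rintro _ rfl
  exact subset_span ⟨a, subset_span rfl, rfl⟩

variable {R : Type*} [NormedRing R] [HasSummableGeomSeries R] (I : TwoSidedIdeal R)

theorem one_mem_of_one_mem_closure (h : (1 : R) ∈ closure (I : Set R)) : 1 ∈ I := by
  obtain ⟨z, hzI, hz⟩ := Metric.mem_closure_iff.1 h 1 one_pos
  have hu : IsUnit z :=
    sub_sub_cancel 1 z ▸ (Units.oneSub (1 - z) (by rwa [← dist_eq_norm])).isUnit
  simpa [hu.unit.inv_mul] using I.mul_mem_left (↑hu.unit⁻¹) z hzI

theorem mem_of_one_add_mem_of_norm_lt_one {x p : R} (hp : IsIdempotentElem p) (hx : 1 + x ∈ I)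
    (hpxp : ‖p * x * p‖ < 1) : p ∈ I := by
  let u := Units.oneSub (-(p * x * p)) (by rwa [norm_neg])
  have hu : p * (1 + x) * p = u * p := by
    simp only [u, Units.val_oneSub, sub_neg_eq_add, mul_add, add_mul, mul_one, one_mul,
      mul_assoc, hp.eq]
  have hpwp : p * (1 + x) * p ∈ I := I.mul_mem_right _ p (I.mul_mem_left p _ hx)
  simpa [hu, ← mul_assoc] using I.mul_mem_left (↑u⁻¹) _ hpwp

end TwoSidedIdeal

theorem isFullIn_iff_one_mem {R : Type*} [NormedRing R] [HasSummableGeomSeries R] (b : R) :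
    IsFullIn b ↔ 1 ∈ TwoSidedIdeal.span {b} := by
  refine ⟨fun h => (TwoSidedIdeal.span {b}).one_mem_of_one_mem_closure (h ▸ trivial),
    fun h => ?_⟩
  rw [IsFullIn, (TwoSidedIdeal.one_mem_iff _).1 h]
  exact closure_univ

theorem DoubleCentralizer.norm_coe_le {𝕜 A : Type*} [NontriviallyNormedField 𝕜]
    [NonUnitalNormedRing A] [NormedSpace 𝕜 A] [SMulCommClass 𝕜 A A] [IsScalarTower 𝕜 A A]
    (a : A) : ‖(a : 𝓜(𝕜, A))‖ ≤ ‖a‖ := by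
  rw [norm_def, Prod.norm_def]
  refine max_le (ContinuousLinearMap.opNorm_mul_apply_le 𝕜 A a) ?_
  refine ContinuousLinearMap.opNorm_le_bound _ (norm_nonneg a) fun y => ?_
  simpa [mul_comm] using norm_mul_le y a

theorem IsStarProjection.norm_mul_mul_le {R : Type*} [NonUnitalNormedRing R] [StarRing R]
    [CStarRing R] {p : R} (hp : IsStarProjection p) (x : R) : ‖p * x * p‖ ≤ ‖x * p‖ := by
  rw [mul_assoc]
  exact (norm_mul_le _ _).trans (mul_le_of_le_one_left (norm_nonneg _) (hp.norm_le p))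

section MatrixUnits

variable {R : Type*} {e : ℕ → ℕ → R}

def IsMatrixUnitSystem [Mul R] [Zero R] (e : ℕ → ℕ → R) : Prop :=
  ∀ i j k l, e i j * e k l = if j = k then e i l else 0

section NonUnitalNonAssocRing

variable [NonUnitalNonAssocRing R]

theorem IsMatrixUnitSystem.map {S F : Type*} [NonUnitalNonAssocRing S] [FunLike F R S]
    [NonUnitalRingHomClass F R S] (he : IsMatrixUnitSystem e) (f : F) :
    IsMatrixUnitSystem fun i j => f (e i j) := by
  intro i j k l
  rw [← map_mul, he, apply_ite f, map_zero]

theorem IsMatrixUnitSystem.isIdempotentElem_sum_diag (he : IsMatrixUnitSystem e) (n : ℕ) :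
    IsIdempotentElem (∑ i ∈ range n, e i i) := by
  simp only [IsIdempotentElem, sum_mul_sum, he _ _ _ _]
  exact sum_congr rfl fun i hi => by rw [sum_ite_eq, if_pos hi]

theorem IsMatrixUnitSystem.diag_mul_sum_diag_self (he : IsMatrixUnitSystem e) (n : ℕ) :
    e n n * ∑ i ∈ range n, e i i = 0 := by
  simp [mul_sum, he _ _ _ _]

theorem IsMatrixUnitSystem.diag_mem_of_diag_mem (he : IsMatrixUnitSystem e)
    (I : TwoSidedIdeal R) {m : ℕ} (hm : e m m ∈ I) (i : ℕ) : e i i ∈ I := by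
  have : e i m * e m m * e m i = e i i := by simp [he _ _ _ _]
  exact this ▸ I.mul_mem_right _ _ (I.mul_mem_left _ _ hm)

theorem IsMatrixUnitSystem.isStarProjection_sum_diag [StarRing R] (he : IsMatrixUnitSystem e)
    (he_star : ∀ i j, star (e i j) = e j i) (n : ℕ) :
    IsStarProjection (∑ i ∈ range n, e i i) :=
  ⟨he.isIdempotentElem_sum_diag n, by simp [IsSelfAdjoint, star_sum, he_star]⟩

end NonUnitalNonAssocRing

theorem IsMatrixUnitSystem.one_mem_of_one_sub_sum_diag_mem [NonAssocRing R]
    (he : IsMatrixUnitSystem e) (I : TwoSidedIdeal R) {n : ℕ}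
    (h : 1 - ∑ i ∈ range n, e i i ∈ I) : 1 ∈ I := by
  have hn : e n n ∈ I := by
    simpa [mul_sub, he.diag_mul_sum_diag_self] using I.mul_mem_left (e n n) _ h
  have hsum : ∑ i ∈ range n, e i i ∈ I := sum_mem fun i _ => he.diag_mem_of_diag_mem I hn i
  simpa using I.add_mem h hsum

end MatrixUnits

theorem stmt16_general {B : Type*} [NonUnitalCStarAlgebra B] {Q : Type*} [CStarAlgebra Q]
    (e : ℕ → ℕ → B)
    (he_star : ∀ i j, star (e i j) = e j i)
    (he_mul : ∀ i j k l, e i j * e k l = if j = k then e i l else 0)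
    (happrox : ∀ b : B,
      Filter.Tendsto (fun n => ‖(∑ i ∈ Finset.range n, e i i) * b - b‖)
        Filter.atTop (nhds 0) ∧
      Filter.Tendsto (fun n => ‖b * (∑ i ∈ Finset.range n, e i i) - b‖)
        Filter.atTop (nhds 0))
    (π : 𝓜(ℂ, B) →⋆ₐ[ℂ] Q) (hsurj : Function.Surjective π)
    (hker : ∀ x : 𝓜(ℂ, B), π x = 0 ↔ ∃ b : B, x = (b : 𝓜(ℂ, B)))
    (a : 𝓜(ℂ, B)) (hfull : IsFullIn (π a)) :
    IsFullIn a := by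
  rw [isFullIn_iff_one_mem] at hfull ⊢
  obtain ⟨w, hwI, hw⟩ := TwoSidedIdeal.exists_mem_span_singleton_of_surjective hsurj hfull
  obtain ⟨b, hb⟩ := (hker (w - 1)).1 (by rw [map_sub, hw, map_one, sub_self])
  obtain ⟨m, hm⟩ := ((happrox b).2.eventually_lt_const one_pos).exists
  let ι := DoubleCentralizer.coeHom (𝕜 := ℂ) (A := B)
  have hιe : IsMatrixUnitSystem fun i j => ι (e i j) := IsMatrixUnitSystem.map he_mul ι
  have hιe_star : ∀ i j, star (ι (e i j)) = ι (e j i) := fun i j => by rw [← map_star, he_star]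
  set P := 1 - ∑ i ∈ range m, ι (e i i)
  have hP : IsStarProjection P := (hιe.isStarProjection_sum_diag hιe_star m).one_sub
  refine hιe.one_mem_of_one_sub_sum_diag_mem _
    (TwoSidedIdeal.mem_of_one_add_mem_of_norm_lt_one _ hP.isIdempotentElem (x := ι b) ?_ ?_)
  · rwa [add_comm, show ι b = w - 1 from hb.symm, sub_add_cancel]
  calc ‖P * ι b * P‖ ≤ ‖ι b * P‖ := hP.norm_mul_mul_le _
    _ = ‖ι (b - b * ∑ i ∈ range m, e i i)‖ := by
      rw [map_sub, map_mul, map_sum, mul_sub, mul_one]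
    _ ≤ ‖b * ∑ i ∈ range m, e i i - b‖ := by
      rw [norm_sub_rev]
      exact DoubleCentralizer.norm_coe_le _
    _ < 1 := hm

/-- `B = A ⊗ K` is modelled by a system of matrix units `e i j` whose
diagonal partial sums form an approximate identity of `B`; the corona `M(B)/B` is
modelled by a surjective star homomorphism `π` on the multiplier algebra `𝓜(ℂ, B)` whose
kernel is (the image of) `B`.  If `π a` is full in the corona, then `a` is full in
`𝓜(ℂ, B)`. -/
theorem stmt16 {B : Type*} [NonUnitalCStarAlgebra B] {Q : Type*} [CStarAlgebra Q]
    (e : ℕ → ℕ → B)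
    (he_star : ∀ i j, star (e i j) = e j i)
    (he_mul : ∀ i j k l, e i j * e k l = if j = k then e i l else 0)
    (he_ne : ∀ i, e i i ≠ 0)
    (happrox : ∀ b : B,
      Filter.Tendsto (fun n => ‖(∑ i ∈ Finset.range n, e i i) * b - b‖)
        Filter.atTop (nhds 0) ∧
      Filter.Tendsto (fun n => ‖b * (∑ i ∈ Finset.range n, e i i) - b‖)
        Filter.atTop (nhds 0))
    (π : 𝓜(ℂ, B) →⋆ₐ[ℂ] Q) (hsurj : Function.Surjective π)
    (hker : ∀ x : 𝓜(ℂ, B), π x = 0 ↔ ∃ b : B, x = (b : 𝓜(ℂ, B)))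
    (a : 𝓜(ℂ, B)) (hfull : IsFullIn (π a)) :
    IsFullIn a :=
  stmt16_general e he_star he_mul happrox π hsurj hker a hfull
end

section
/- Let q_∞(A) = l^∞(A)/c₀(A) where A is a unital purely infinite simple C*-algebra. Then q_∞(A) has property (P1) and property (P2): every full element b of q_∞(A) admits x with x*·b·x = 1 (when b ≥ 0), and q_∞(A) contains two isometries with mutually orthogonal range projections. -/
open scoped ENNReal MultiplierAlgebra

/-- A unital C*-algebra is purely infinite and simple iff it is noncommutative and every
nonzero element can be multiplied to the identity (Cuntz's characterization). -/
def PurelyInfiniteSimple (A : Type*) [CStarAlgebra A] : Prop :=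
  (∀ a : A, a ≠ 0 → ∃ x y : A, x * a * y = 1) ∧ ¬ (∀ a b : A, a * b = b * a)

/-!
A positive full element `b` of `q_∞(A)` lifts to a sequence `u` of positive elements of `A`.
Since `1` lies in the ideal generated by `b`, it lifts to a sequence dominated by `(‖u n‖)` and
tending to `1`, so `‖u n‖ > δ` eventually, for some `δ > 0`. In a purely infinite simple `A`, a
positive `a` with `‖a‖ > δ` admits `z` with `z⋆ a z = 1` and `‖z‖ ≤ δ^(-1/2)`: the nonzero element
`e = (a - δ)₊` yields an isometry `e w`, and `max(a, δ)^(-1/2)` inverts `a^(1/2)` on the range of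
`e`. These `z n` form a bounded sequence whose image `x` satisfies `x⋆ b x = 1`.

For (P2), a self-adjoint `s ∈ A` with spectrum on both sides of some `m` has nonzero orthogonal
parts `(s - m)₊` and `(s - m)₋`, each of which yields an isometry with range in its right ideal;
constant sequences carry these to `q_∞(A)`.
-/

open Filter Asymptotics CFC ComplexStarModule

lemma norm_eq_one_of_star_mul_self_eq_one {B : Type*} [CStarAlgebra B] [Nontrivial B] {v : B}
    (hv : star v * v = 1) : ‖v‖ = 1 := by
  have h : ‖v‖ * ‖v‖ = 1 := by rw [← CStarRing.norm_star_mul_self, hv, norm_one]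
  nlinarith [norm_nonneg v]

lemma exists_isSelfAdjoint_not_commute {B : Type*} [CStarAlgebra B]
    (hnc : ¬ ∀ a b : B, a * b = b * a) : ∃ s : B, IsSelfAdjoint s ∧ ∃ c : B, s * c ≠ c * s := by
  by_contra! h
  refine hnc fun a b => ?_
  rw [← realPart_add_I_smul_imaginaryPart a, add_mul, mul_add, smul_mul_assoc, mul_smul_comm,
    h _ (ℜ a).property b, h _ (ℑ a).property b]

lemma exists_isSelfAdjoint_lt_mem_spectrum {B : Type*} [CStarAlgebra B] [Nontrivial B]
    (hnc : ¬ ∀ a b : B, a * b = b * a) :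
    ∃ s : B, IsSelfAdjoint s ∧ ∃ t₁ ∈ spectrum ℝ s, ∃ t₂ ∈ spectrum ℝ s, t₁ < t₂ := by
  obtain ⟨s, hs, c, hsc⟩ := exists_isSelfAdjoint_not_commute hnc
  obtain ⟨t₀, ht₀⟩ := ContinuousFunctionalCalculus.spectrum_nonempty (R := ℝ) s hs
  obtain ⟨t, ht, htt₀⟩ : ∃ t ∈ spectrum ℝ s, t ≠ t₀ := by
    by_contra! h
    refine hsc ?_
    rw [eq_algebraMap_of_spectrum_subset_singleton s t₀ h]
    exact Algebra.commutes t₀ c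
  rcases htt₀.lt_or_gt with hlt | hlt
  exacts [⟨s, hs, t, ht, t₀, ht₀, hlt⟩, ⟨s, hs, t₀, ht₀, t, ht, hlt⟩]

lemma max_zero_sub_mul_inv_sqrt_max {δ : ℝ} (hδ : 0 < δ) (t : ℝ) :
    max 0 (t - δ) * ((√(max t δ))⁻¹ * t * (√(max t δ))⁻¹) = max 0 (t - δ) := by
  rcases le_or_gt t δ with ht | ht
  · simp [ht]
  · have hsqrt := Real.sqrt_pos.mpr (hδ.trans ht)
    rw [max_eq_left ht.le]
    field_simp
    rw [Real.sq_sqrt (hδ.trans ht).le]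

/-- Property (P2): the unit is properly infinite. -/
def HasProperlyInfiniteUnit (R : Type*) [Semiring R] [StarRing R] : Prop :=
  ∃ v₁ v₂ : R, star v₁ * v₁ = 1 ∧ star v₂ * v₂ = 1 ∧ (v₁ * star v₁) * (v₂ * star v₂) = 0

lemma HasProperlyInfiniteUnit.map {R S F : Type*} [Semiring R] [StarRing R] [Semiring S]
    [StarRing S] [FunLike F R S] [RingHomClass F R S] [StarHomClass F R S] (f : F)
    (h : HasProperlyInfiniteUnit R) : HasProperlyInfiniteUnit S := by
  obtain ⟨v₁, v₂, h₁, h₂, h₁₂⟩ := h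
  exact ⟨f v₁, f v₂, by rw [← map_star, ← map_mul, h₁, map_one],
    by rw [← map_star, ← map_mul, h₂, map_one], by simp only [← map_star, ← map_mul, h₁₂, map_zero]⟩

section PurelyInfinite

variable {B : Type*} [CStarAlgebra B] [PartialOrder B] [StarOrderedRing B]

lemma mul_self_le_norm_smul_self {a : B} (ha : 0 ≤ a) : a * a ≤ ‖a‖ • a := by
  have h := CStarAlgebra.star_left_conjugate_le_norm_smul (a := sqrt a) (b := a)
  rw [(sqrt_nonneg a).isSelfAdjoint.star_eq, sqrt_mul_sqrt_self a] at h
  calc a * a = sqrt a * (sqrt a * sqrt a) * sqrt a := by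
        conv_lhs => rw [← sqrt_mul_sqrt_self a]
        simp only [mul_assoc]
    _ ≤ ‖a‖ • a := by rwa [sqrt_mul_sqrt_self a]

lemma exists_star_mul_mul_eq_one_of_one_le_smul {c : B} {K : ℝ} (hK : 0 < K)
    (h : 1 ≤ K • c) : ∃ w : B, star w * c * w = 1 := by
  have hc : IsStrictlyPositive c := by
    simpa [smul_smul, inv_mul_cancel₀ hK.ne'] using
      (isStrictlyPositive_one.of_le h).smul (inv_pos.mpr hK)
  exact ⟨c ^ (-(1 / 2) : ℝ), by
    rw [rpow_nonneg.isSelfAdjoint.star_eq, conjugate_rpow_neg_one_half c]⟩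

lemma exists_star_mul_mul_eq_one_of_nonneg [Nontrivial B]
    (hB : ∀ c : B, c ≠ 0 → ∃ x y : B, x * c * y = 1)
    {a : B} (ha : 0 ≤ a) (ha₀ : a ≠ 0) : ∃ z : B, star z * a * z = 1 := by
  obtain ⟨x, y, hxy⟩ := hB a ha₀
  have hx : x ≠ 0 := by rintro rfl; simp at hxy
  have hsa : IsSelfAdjoint a := .of_nonneg ha
  set K := ‖star x * x‖ * ‖a‖
  have hK : 0 < K :=
    mul_pos (norm_pos_iff.mpr ((CStarRing.star_mul_self_ne_zero_iff x).mpr hx))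
      (norm_pos_iff.mpr ha₀)
  have hdom : a * (star x * x) * a ≤ K • a := by
    calc a * (star x * x) * a ≤ ‖star x * x‖ • (a * a) := by
          simpa [hsa.star_eq] using
            CStarAlgebra.star_left_conjugate_le_norm_smul (a := a) (b := star x * x)
      _ ≤ ‖star x * x‖ • (‖a‖ • a) :=
          smul_le_smul_of_nonneg_left (mul_self_le_norm_smul_self ha) (norm_nonneg _)
      _ = K • a := smul_smul _ _ _
  have hone : 1 ≤ K • (star y * a * y) := by
    calc (1 : B) = star y * (a * (star x * x) * a) * y := by
          simpa [hsa.star_eq, mul_assoc] using (congrArg (fun t => star t * t) hxy).symm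
      _ ≤ star y * (K • a) * y := star_left_conjugate_le_conjugate hdom y
      _ = K • (star y * a * y) := by rw [mul_smul_comm, smul_mul_assoc]
  obtain ⟨w, hw⟩ := exists_star_mul_mul_eq_one_of_one_le_smul hK hone
  exact ⟨y * w, by simpa [mul_assoc] using hw⟩

lemma exists_star_mul_self_mul_eq_one [Nontrivial B]
    (hB : ∀ c : B, c ≠ 0 → ∃ x y : B, x * c * y = 1)
    {e : B} (he : e ≠ 0) : ∃ z : B, star (e * z) * (e * z) = 1 := by
  obtain ⟨z, hz⟩ := exists_star_mul_mul_eq_one_of_nonneg hB (star_mul_self_nonneg e)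
    ((CStarRing.star_mul_self_ne_zero_iff e).mpr he)
  exact ⟨z, by simpa [mul_assoc] using hz⟩

lemma exists_star_mul_mul_eq_one_norm_le [Nontrivial B]
    (hB : ∀ c : B, c ≠ 0 → ∃ x y : B, x * c * y = 1)
    {a : B} (ha : 0 ≤ a) {δ : ℝ} (hδ : 0 < δ) (hδa : δ < ‖a‖) :
    ∃ z : B, star z * a * z = 1 ∧ ‖z‖ ≤ (√δ)⁻¹ := by
  set h : ℝ → ℝ := fun t => max 0 (t - δ)
  set q : ℝ → ℝ := fun t => (√(max t δ))⁻¹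
  have hh : Continuous h := by fun_prop
  have hq : Continuous q :=
    (Real.continuous_sqrt.comp (continuous_id.max continuous_const)).inv₀
      fun t => (Real.sqrt_pos.mpr (lt_max_of_lt_right hδ)).ne'
  set e := cfc h a
  set r := cfc q a
  have he_sa : IsSelfAdjoint e := cfc_predicate h a
  have hr_sa : IsSelfAdjoint r := cfc_predicate q a
  have he : e ≠ 0 := by
    intro he
    have := eqOn_of_cfc_eq_cfc (he.trans (cfc_const_zero ℝ a).symm) hh.continuousOn
      continuousOn_const (.of_nonneg ha) (CStarAlgebra.norm_mem_spectrum_of_nonneg ha)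
    simp only [h] at this
    linarith [le_max_right 0 (‖a‖ - δ)]
  have her : e * (r * a * r) = e := by
    calc e * (r * a * r) = cfc (fun t => h t * (q t * t * q t)) a := by
          rw [cfc_mul h _ a hh.continuousOn (by fun_prop),
            cfc_mul _ q a (by fun_prop) hq.continuousOn,
            cfc_mul q _ a hq.continuousOn (by fun_prop), cfc_id' ℝ a]
      _ = e := cfc_congr fun t _ => max_zero_sub_mul_inv_sqrt_max hδ t
  obtain ⟨z, hz⟩ := exists_star_mul_self_mul_eq_one hB he
  refine ⟨r * (e * z), ?_, ?_⟩
  · calc star (r * (e * z)) * a * (r * (e * z)) = star z * (e * (r * a * r)) * e * z := by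
          simp only [star_mul, he_sa.star_eq, hr_sa.star_eq, mul_assoc]
      _ = 1 := by rw [her, ← hz, star_mul, he_sa.star_eq]; simp only [mul_assoc]
  · calc ‖r * (e * z)‖ ≤ ‖r‖ * ‖e * z‖ := norm_mul_le _ _
      _ = ‖r‖ := by rw [norm_eq_one_of_star_mul_self_eq_one hz, mul_one]
      _ ≤ (√δ)⁻¹ := by
        refine norm_cfc_le (by positivity) fun t _ => ?_
        rw [Real.norm_of_nonneg (by positivity)]
        exact inv_anti₀ (Real.sqrt_pos.mpr hδ) (Real.sqrt_le_sqrt (le_max_right t δ))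

lemma exists_posPart_ne_zero_negPart_ne_zero [Nontrivial B] (hnc : ¬ ∀ a b : B, a * b = b * a) :
    ∃ x : B, x⁺ ≠ 0 ∧ x⁻ ≠ 0 := by
  obtain ⟨s, hs, t₁, ht₁, t₂, ht₂, hlt⟩ := exists_isSelfAdjoint_lt_mem_spectrum hnc
  have hx : IsSelfAdjoint (s - algebraMap ℝ B ((t₁ + t₂) / 2)) :=
    hs.sub (.algebraMap B (.all _))
  refine ⟨s - algebraMap ℝ B ((t₁ + t₂) / 2), ?_, ?_⟩
  · rw [Ne, posPart_eq_zero_iff _ hx, sub_nonpos, le_algebraMap_iff_spectrum_le hs]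
    intro h
    linarith [h t₂ ht₂]
  · rw [Ne, negPart_eq_zero_iff _ hx, sub_nonneg, algebraMap_le_iff_le_spectrum hs]
    intro h
    linarith [h t₁ ht₁]

lemma hasProperlyInfiniteUnit_of_star_mul_eq_zero [Nontrivial B]
    (hB : ∀ c : B, c ≠ 0 → ∃ x y : B, x * c * y = 1)
    {e₁ e₂ : B} (h₁ : e₁ ≠ 0) (h₂ : e₂ ≠ 0) (h : star e₁ * e₂ = 0) :
    HasProperlyInfiniteUnit B := by
  obtain ⟨z₁, hz₁⟩ := exists_star_mul_self_mul_eq_one hB h₁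
  obtain ⟨z₂, hz₂⟩ := exists_star_mul_self_mul_eq_one hB h₂
  have h' : ∀ y, star e₁ * (e₂ * y) = 0 := fun y => by rw [← mul_assoc, h, zero_mul]
  exact ⟨e₁ * z₁, e₂ * z₂, hz₁, hz₂, by simp only [star_mul, mul_assoc, h', mul_zero]⟩

lemma PurelyInfiniteSimple.hasProperlyInfiniteUnit [Nontrivial B] (hB : PurelyInfiniteSimple B) :
    HasProperlyInfiniteUnit B := by
  obtain ⟨x, hpos, hneg⟩ := exists_posPart_ne_zero_negPart_ne_zero hB.2
  refine hasProperlyInfiniteUnit_of_star_mul_eq_zero hB.1 hpos hneg ?_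
  rw [(posPart_nonneg x).isSelfAdjoint.star_eq, posPart_mul_negPart]

end PurelyInfinite

lemma IsFullIn.one_mem_span {R : Type*} [NormedRing R] [HasSummableGeomSeries R] {b : R}
    (hb : IsFullIn b) : (1 : R) ∈ TwoSidedIdeal.span {b} := by
  obtain ⟨x, hx, hx1⟩ := Metric.mem_closure_iff.mp (hb ▸ Set.mem_univ (1 : R)) 1 one_pos
  have htop := Ideal.eq_top_of_norm_lt_one (TwoSidedIdeal.span {b}).asIdeal
    (TwoSidedIdeal.mem_asIdeal.mpr hx) (by rwa [← dist_eq_norm])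
  exact TwoSidedIdeal.mem_asIdeal.mp (htop ▸ Submodule.mem_top)

section SequenceAlgebra

variable {A : Type*} [CStarAlgebra A]

lemma lp.isBigO_mul_left (v w : lp (fun _ : ℕ => A) ∞) (l : Filter ℕ) :
    (fun n => (v * w) n) =O[l] (fun n => w n) :=
  .of_bound ‖v‖ <| .of_forall fun n => by
    rw [lp.infty_coeFn_mul]
    exact (norm_mul_le _ _).trans
      (mul_le_mul_of_nonneg_right (lp.norm_apply_le_norm ENNReal.top_ne_zero v n) (norm_nonneg _))

lemma lp.isBigO_mul_right (v w : lp (fun _ : ℕ => A) ∞) (l : Filter ℕ) :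
    (fun n => (w * v) n) =O[l] (fun n => w n) :=
  .of_bound ‖v‖ <| .of_forall fun n => by
    rw [lp.infty_coeFn_mul, mul_comm ‖v‖]
    exact (norm_mul_le _ _).trans
      (mul_le_mul_of_nonneg_left (lp.norm_apply_le_norm ENNReal.top_ne_zero v n) (norm_nonneg _))

variable [Nontrivial A]

noncomputable def lp.constStarAlgHom : A →⋆ₐ[ℂ] lp (fun _ : ℕ => A) ∞ where
  toFun x := ⟨fun _ => x, memℓp_infty ⟨‖x‖, by rintro - ⟨_, rfl⟩; exact le_rfl⟩⟩
  map_one' := rfl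
  map_mul' _ _ := rfl
  map_zero' := rfl
  map_add' _ _ := rfl
  commutes' _ := rfl
  map_star' _ := rfl

variable {Q : Type*} [CStarAlgebra Q] {π : lp (fun _ : ℕ => A) ∞ →⋆ₐ[ℂ] Q}

lemma exists_lift_forall_nonneg [PartialOrder A] [StarOrderedRing A] [PartialOrder Q]
    [StarOrderedRing Q] (hsurj : Function.Surjective π) {b : Q} (hb : 0 ≤ b) :
    ∃ u, π u = b ∧ ∀ n, 0 ≤ u n := by
  obtain ⟨c, rfl⟩ := CStarAlgebra.nonneg_iff_eq_star_mul_self.mp hb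
  obtain ⟨v, rfl⟩ := hsurj c
  refine ⟨star v * v, by rw [map_mul, map_star], fun n => ?_⟩
  rw [lp.infty_coeFn_mul, Pi.mul_apply, lp.star_apply]
  exact star_mul_self_nonneg _

lemma exists_lift_isBigO_of_mem_span (hsurj : Function.Surjective π) (u : lp (fun _ : ℕ => A) ∞)
    {q : Q} (hq : q ∈ TwoSidedIdeal.span {π u}) :
    ∃ w, π w = q ∧ (fun n => w n) =O[atTop] (fun n => u n) := by
  induction hq using TwoSidedIdeal.span_induction with
  | mem x hx => exact ⟨u, (Set.mem_singleton_iff.mp hx).symm, isBigO_refl _ _⟩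
  | zero => exact ⟨0, map_zero π, by simpa [lp.coeFn_zero] using isBigO_zero _ _⟩
  | add x y _ _ hx hy =>
    obtain ⟨w, rfl, hw⟩ := hx
    obtain ⟨w', rfl, hw'⟩ := hy
    exact ⟨w + w', map_add π w w', by simpa [lp.coeFn_add] using hw.add hw'⟩
  | neg x _ hx =>
    obtain ⟨w, rfl, hw⟩ := hx
    exact ⟨-w, map_neg π w, by simpa only [lp.coeFn_neg, Pi.neg_apply] using hw.neg_left⟩
  | left_absorb a x _ hx =>
    obtain ⟨w, rfl, hw⟩ := hx
    obtain ⟨v, rfl⟩ := hsurj a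
    exact ⟨v * w, map_mul π v w, (lp.isBigO_mul_left v w _).trans hw⟩
  | right_absorb b x _ hx =>
    obtain ⟨w, rfl, hw⟩ := hx
    obtain ⟨v, rfl⟩ := hsurj b
    exact ⟨w * v, map_mul π w v, (lp.isBigO_mul_right v w _).trans hw⟩

lemma isBigO_one_norm_of_isFullIn (hsurj : Function.Surjective π)
    (hker : ∀ w : lp (fun _ : ℕ => A) ∞, π w = 0 → Tendsto (fun n => ‖w n‖) atTop (nhds 0))
    {u : lp (fun _ : ℕ => A) ∞} (hu : IsFullIn (π u)) :
    (fun _ => (1 : ℝ)) =O[atTop] (fun n => ‖u n‖) := by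
  obtain ⟨w, hw, hwu⟩ := exists_lift_isBigO_of_mem_span hsurj u hu.one_mem_span
  have hsmall : (fun n => w n - 1) =o[atTop] (fun _ => (1 : A)) := by
    refine (isLittleO_one_iff A).mpr (tendsto_zero_iff_norm_tendsto_zero.mpr ?_)
    exact hker (w - 1) (by rw [map_sub, hw, map_one, sub_self])
  have hone : (fun _ => (1 : A)) =O[atTop] (fun n => w n) := by
    simpa using hsmall.right_isBigO_add
  simpa using (hone.trans hwu).norm_norm

lemma exists_star_mul_mul_eq_one_of_isBigO [PartialOrder A] [StarOrderedRing A]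
    (hA : ∀ c : A, c ≠ 0 → ∃ x y : A, x * c * y = 1)
    (hker : ∀ w : lp (fun _ : ℕ => A) ∞, Tendsto (fun n => ‖w n‖) atTop (nhds 0) → π w = 0)
    {u : lp (fun _ : ℕ => A) ∞} (hu : ∀ n, 0 ≤ u n)
    (hbd : (fun _ => (1 : ℝ)) =O[atTop] (fun n => ‖u n‖)) :
    ∃ z, π (star z * u * z) = 1 := by
  obtain ⟨C, hC, hCu⟩ := hbd.exists_pos
  obtain ⟨N, hN⟩ := eventually_atTop.mp hCu.bound
  set δ := (2 * C)⁻¹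
  have hδ : 0 < δ := by positivity
  have hδu : ∀ n, N ≤ n → δ < ‖u n‖ := by
    intro n hn
    have h1 := hN n hn
    rw [norm_one, norm_norm] at h1
    have h2 : 2 * C * δ = 1 := mul_inv_cancel₀ (by positivity)
    nlinarith
  have hz : ∀ n, ∃ z : A, (N ≤ n → star z * u n * z = 1) ∧ ‖z‖ ≤ (√δ)⁻¹ := by
    intro n
    by_cases hn : N ≤ n
    · obtain ⟨z, hz, hzδ⟩ := exists_star_mul_mul_eq_one_norm_le hA (hu n) hδ (hδu n hn)
      exact ⟨z, fun _ => hz, hzδ⟩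
    · exact ⟨0, fun h => absurd h hn, by simp only [norm_zero]; positivity⟩
  choose z hz hzδ using hz
  let zl : lp (fun _ : ℕ => A) ∞ := ⟨z, memℓp_infty ⟨(√δ)⁻¹, by rintro - ⟨n, rfl⟩; exact hzδ n⟩⟩
  refine ⟨zl, sub_eq_zero.mp ?_⟩
  rw [← map_one π, ← map_sub]
  refine hker _ (tendsto_const_nhds.congr' ?_)
  filter_upwards [eventually_ge_atTop N] with n hn
  change 0 = ‖star (z n) * u n * z n - 1‖
  rw [hz n hn, sub_self, norm_zero]

end SequenceAlgebra

/-- `q_∞(A) = l^∞(A)/c₀(A)` for `A` unital purely infinite simple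
(the quotient modelled by a surjective star homomorphism `π` with kernel `c₀(A)`)
has properties (P1) and (P2). -/
theorem stmt18 {A : Type} [CStarAlgebra A] [Nontrivial A] (hA : PurelyInfiniteSimple A)
    {Q : Type} [CStarAlgebra Q] [PartialOrder Q] [StarOrderedRing Q]
    (π : lp (fun _ : ℕ => A) ∞ →⋆ₐ[ℂ] Q) (hsurj : Function.Surjective π)
    (hker : ∀ a : lp (fun _ : ℕ => A) ∞,
      π a = 0 ↔ Filter.Tendsto (fun n => ‖(a : ∀ _ : ℕ, A) n‖) Filter.atTop (nhds 0)) :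
    (∀ b : Q, 0 ≤ b → IsFullIn b → ∃ x : Q, star x * b * x = 1) ∧
    (∃ v₁ v₂ : Q, star v₁ * v₁ = 1 ∧ star v₂ * v₂ = 1 ∧
      (v₁ * star v₁) * (v₂ * star v₂) = 0) := by
  let _ : PartialOrder A := CStarAlgebra.spectralOrder A
  let _ : StarOrderedRing A := CStarAlgebra.spectralOrderedRing A
  refine ⟨fun b hb hfull => ?_, (hA.hasProperlyInfiniteUnit.map lp.constStarAlgHom).map π⟩
  obtain ⟨u, rfl, hu⟩ := exists_lift_forall_nonneg hsurj hb
  obtain ⟨z, hz⟩ := exists_star_mul_mul_eq_one_of_isBigO hA.1 (fun w => (hker w).mpr) hu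
    (isBigO_one_norm_of_isFullIn hsurj (fun w => (hker w).mp) hfull)
  exact ⟨π z, by rw [← map_star, ← map_mul, ← map_mul, hz]⟩
end
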